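/- Let P be an n×n column stochastic matrix with P_{jj} > 0 for all j, let τ̄ ∈ ℕ, and let τ(k, j, i) ∈ {0, …, τ̄} be delay functions with τ(k, j, j) = 0. Then for any k ≥ 0 and any integer ℓ ≥ τ̄ + 1, the word B = P̄[k+ℓ] ⋯ P̄[k+1] of augmented matrices satisfies: for every r ∈ {0, 1, …, τ̄} and every j ∈ {1, …, n}, the entry B(j, r·n + j) is strictly positive (i.e., each of the top n×n blocks B_{0,0}, B_{0,1}, …, B_{0,τ̄} of B has strictly positive diagonal entries). -/
import Mathlib


open Matrix Filter

/-- An `N × N` real matrix is column stochastic if all entries are nonnegative and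
each column sums to `1`. -/
def ColStoch {N : Type*} [Fintype N] (A : Matrix N N ℝ) : Prop :=
  (∀ j i, 0 ≤ A j i) ∧ ∀ i, ∑ j, A j i = 1

/-- The augmented `(τ̄+1)n × (τ̄+1)n` matrix `P̄[k]`, indexed by pairs `(r, j)` where
`r ∈ Fin (τ̄+1)` is the block (virtual-delay) index and `j ∈ Fin n` is the node index.
Block column `0` contains the blocks `P_r[k]` (with `P_r[k](j,i) = P(j,i)` if
`τ(k,j,i) = r` and `0` otherwise); the block in block-row `s-1`, block-column `s`
is the identity for `s = 1, …, τ̄`; all other blocks are zero. -/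
def AugMat (n τbar : ℕ) (P : Matrix (Fin n) (Fin n) ℝ)
    (τ : ℕ → Fin n → Fin n → ℕ) (k : ℕ) :
    Matrix (Fin (τbar + 1) × Fin n) (Fin (τbar + 1) × Fin n) ℝ :=
  fun q p =>
    if p.1.val = 0 then (if τ k q.2 p.2 = q.1.val then P q.2 p.2 else 0)
    else if q.1.val + 1 = p.1.val ∧ q.2 = p.2 then 1 else 0

/-- The word `P̄[k+ℓ] ⋯ P̄[k+2] ⬝ P̄[k+1]` of `ℓ` consecutive augmented matrices. -/
def Word (n τbar : ℕ) (P : Matrix (Fin n) (Fin n) ℝ)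
    (τ : ℕ → Fin n → Fin n → ℕ) (k : ℕ) :
    ℕ → Matrix (Fin (τbar + 1) × Fin n) (Fin (τbar + 1) × Fin n) ℝ
  | 0 => 1
  | ℓ + 1 => AugMat n τbar P τ (k + ℓ + 1) * Word n τbar P τ k ℓ

/-- A column stochastic matrix `B` is SIA if its powers `B^m` converge (entrywise)
to a matrix of the form `c ⬝ 𝟙ᵀ` for some nonnegative vector `c`. -/
def IsSIA {N : Type*} [Fintype N] [DecidableEq N] (B : Matrix N N ℝ) : Prop :=
  ColStoch B ∧ ∃ c : N → ℝ, (∀ j, 0 ≤ c j) ∧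
    Tendsto (fun m => B ^ m) atTop (nhds (Matrix.of fun j _ => c j))

lemma prod_entry_pos {N : Type*} [Fintype N] (A B : Matrix N N ℝ)
    (hA : ∀ q p, 0 ≤ A q p) (hB : ∀ q p, 0 ≤ B q p) (m q p : N)
    (h1 : 0 < A q m) (h2 : 0 < B m p) : 0 < (A * B) q p := by
  rw [Matrix.mul_apply]
  have h := Finset.single_le_sum (f := fun m' => A q m' * B m' p)
    (fun i _ => mul_nonneg (hA _ _) (hB _ _)) (Finset.mem_univ m)
  exact lt_of_lt_of_le (mul_pos h1 h2) h

lemma augmat_nonneg (n τbar : ℕ) (P : Matrix (Fin n) (Fin n) ℝ)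
    (hP : ∀ j i, 0 ≤ P j i) (τ : ℕ → Fin n → Fin n → ℕ) (k : ℕ) :
    ∀ q p, 0 ≤ AugMat n τbar P τ k q p := by
  intro q p
  unfold AugMat
  split_ifs <;> first | exact hP _ _ | norm_num

lemma word_nonneg (n τbar : ℕ) (P : Matrix (Fin n) (Fin n) ℝ)
    (hP : ∀ j i, 0 ≤ P j i) (τ : ℕ → Fin n → Fin n → ℕ) (k : ℕ) :
    ∀ ℓ q p, 0 ≤ Word n τbar P τ k ℓ q p := by
  intro ℓ
  induction ℓ with
  | zero =>
    intro q p
    show (0:ℝ) ≤ (1 : Matrix _ _ ℝ) q p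
    rw [Matrix.one_apply]
    split_ifs <;> norm_num
  | succ m ih =>
    intro q p
    show (0:ℝ) ≤ (AugMat n τbar P τ (k + m + 1) * Word n τbar P τ k m) q p
    rw [Matrix.mul_apply]
    exact Finset.sum_nonneg fun i _ =>
      mul_nonneg (augmat_nonneg n τbar P hP τ _ _ _) (ih _ _)

lemma claimA (n τbar : ℕ) (P : Matrix (Fin n) (Fin n) ℝ)
    (hP : ∀ j i, 0 ≤ P j i) (τ : ℕ → Fin n → Fin n → ℕ) :
    ∀ ℓ k (s r : Fin (τbar + 1)) (j : Fin n), s.val + ℓ = r.val →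
      0 < Word n τbar P τ k ℓ (s, j) (r, j) := by
  intro ℓ
  induction ℓ with
  | zero =>
    intro k s r j h
    have : s = r := Fin.ext (by omega)
    subst this
    show (0:ℝ) < (1 : Matrix _ _ ℝ) (s, j) (s, j)
    simp [Matrix.one_apply_eq]
  | succ m ih =>
    intro k s r j h
    have hr : r.val ≤ τbar := by omega
    have hs1 : s.val + 1 < τbar + 1 := by omega
    set s' : Fin (τbar + 1) := ⟨s.val + 1, hs1⟩ with hs'
    show (0:ℝ) < (AugMat n τbar P τ (k + m + 1) * Word n τbar P τ k m) (s, j) (r, j)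
    apply prod_entry_pos _ _ (augmat_nonneg n τbar P hP τ _)
      (word_nonneg n τbar P hP τ k m) (s', j)
    · unfold AugMat
      simp only [hs']
      norm_num
    · exact ih k s' r j (by simp [hs']; omega)

lemma claimB (n τbar : ℕ) (P : Matrix (Fin n) (Fin n) ℝ)
    (hP : ∀ j i, 0 ≤ P j i) (hdiag : ∀ j, 0 < P j j)
    (τ : ℕ → Fin n → Fin n → ℕ) (hτself : ∀ k j, τ k j j = 0) :
    ∀ ℓ k (r : Fin (τbar + 1)) (j : Fin n), r.val ≤ ℓ →
      0 < Word n τbar P τ k ℓ (0, j) (r, j) := by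
  intro ℓ
  induction ℓ with
  | zero =>
    intro k r j h
    have : r = 0 := Fin.ext (by simpa using h)
    subst this
    show (0:ℝ) < (1 : Matrix _ _ ℝ) ((0:Fin (τbar+1)), j) (0, j)
    simp [Matrix.one_apply_eq]
  | succ m ih =>
    intro k r j h
    rcases Nat.lt_or_ge r.val (m + 1) with hlt | hge
    · show (0:ℝ) < (AugMat n τbar P τ (k + m + 1) * Word n τbar P τ k m) (0, j) (r, j)
      apply prod_entry_pos _ _ (augmat_nonneg n τbar P hP τ _)
        (word_nonneg n τbar P hP τ k m) (0, j)
      · unfold AugMat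
        simp [hτself]
        exact hdiag j
      · exact ih k r j (by omega)
    · exact claimA n τbar P hP τ (m + 1) k 0 r j (by simp only [Fin.val_zero]; omega)

theorem statement13 (n : ℕ)
    (P : Matrix (Fin n) (Fin n) ℝ) (hP : ColStoch P)
    (hdiag : ∀ j, 0 < P j j)
    (τbar : ℕ) (τ : ℕ → Fin n → Fin n → ℕ)
    (hτle : ∀ k j i, τ k j i ≤ τbar)
    (hτself : ∀ k j, τ k j j = 0)
    (k ℓ : ℕ) (hℓ : τbar + 1 ≤ ℓ) :
    ∀ (r : Fin (τbar + 1)) (j : Fin n),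
      0 < Word n τbar P τ k ℓ (0, j) (r, j) := by
  intro r j
  exact claimB n τbar P hP.1 hdiag τ hτself ℓ k r j (by omega)
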